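/- arXiv:2309.04238 — 2 statements merged into one kernel-verified Lean document; each statement's English description precedes it below -/
import Mathlib

section
/- Let Λ > 0, d ≥ 4 an integer, r₀ = ((d-3)/Λ)^{1/2}, and consider g(r) = 1 - m·r^{-(d-3)} - Λr²/(d-1) for a parameter m ∈ ℝ. Then g has a double zero (a point r* > 0 with g(r*) = 0 and g'(r*) = 0) if and only if m = 2r₀^{d-3}/(d-1), in which case r* = r₀. -/
/-! Write `n = d - 3`, so that `d - 1 = n + 2`. At `r ≠ 0` the conditions `g r = 0` and
`r g'(r) = 0` are two linear equations in `m r⁻ⁿ` and `Λ r²`, with the unique solution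
`Λ r² = n`, `m r⁻ⁿ = 2 / (n + 2)`; for `r > 0` the first says `r = r₀`. -/

noncomputable def blackening (n : ℕ) (Λ m r : ℝ) : ℝ :=
  1 - m * (r ^ n)⁻¹ - Λ * r ^ 2 / (n + 2)

theorem hasDerivAt_blackening (n : ℕ) (Λ m : ℝ) {r : ℝ} (hr : r ≠ 0) :
    HasDerivAt (blackening n Λ m) (n * m / r ^ (n + 1) - 2 * Λ * r / (n + 2)) r := by
  have hinv : HasDerivAt (fun r : ℝ => (r ^ n)⁻¹) (-(n / r ^ (n + 1))) r := by
    refine ((hasDerivAt_pow n r).inv (pow_ne_zero n hr)).congr_deriv ?_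
    rcases n with _ | k
    · simp
    · simp only [Nat.add_sub_cancel]
      field_simp
      ring
  refine (((hasDerivAt_const r 1).sub (hinv.const_mul m)).sub
    (((hasDerivAt_pow 2 r).const_mul Λ).div_const ((n : ℝ) + 2))).congr_deriv ?_
  ring

theorem blackening_eq_zero_and_deriv_eq_zero_iff {n : ℕ} (hn : n ≠ 0) (Λ m : ℝ) {r : ℝ}
    (hr : r ≠ 0) :
    blackening n Λ m r = 0 ∧ deriv (blackening n Λ m) r = 0 ↔
      Λ * r ^ 2 = n ∧ m = 2 * r ^ n / (n + 2) := by
  rw [(hasDerivAt_blackening n Λ m hr).deriv, blackening]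
  have hrn : r ^ n ≠ 0 := pow_ne_zero n hr
  have hn' : (n : ℝ) ≠ 0 := Nat.cast_ne_zero.mpr hn
  have hn2 : (n : ℝ) + 2 ≠ 0 := by positivity
  constructor
  · rintro ⟨hg, hg'⟩
    field_simp at hg hg'
    have hΛ : Λ * r ^ 2 = n := by
      apply mul_left_cancel₀ (mul_ne_zero hrn hn2)
      linear_combination (-n : ℝ) * hg - hg'
    refine ⟨hΛ, ?_⟩
    rw [eq_div_iff hn2]
    apply mul_left_cancel₀ hn'
    linear_combination hg' + 2 * r ^ n * hΛ
  · rintro ⟨hΛ, rfl⟩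
    constructor
    · field_simp
      linear_combination -hΛ
    · field_simp
      linear_combination (-2 * r ^ n) * hΛ

theorem eq_sqrt_div_iff_mul_sq_eq {Λ a r : ℝ} (hΛ : 0 < Λ) (ha : 0 ≤ a) (hr : 0 ≤ r) :
    r = √(a / Λ) ↔ Λ * r ^ 2 = a := by
  rw [← Real.sqrt_sq hr, Real.sqrt_inj (sq_nonneg r) (by positivity), Real.sqrt_sq hr,
    eq_div_iff hΛ.ne', mul_comm]

/-- The Schwarzschild–de Sitter blackening factor `g(r) = 1 - m r^{-(d-3)} - Λr²/(d-1)` with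
`Λ > 0` has a double zero (some `r* > 0` with `g(r*) = 0 = g'(r*)`) iff `m = 2 r₀^{d-3}/(d-1)`
where `r₀ = ((d-3)/Λ)^{1/2}`, in which case the double zero is at `r* = r₀`. -/
theorem SdS_double_zero_iff_extremal_mass (d : ℕ) (hd : 4 ≤ d) (Λ : ℝ) (hΛ : 0 < Λ) (m : ℝ)
    (r₀ : ℝ) (hr₀ : r₀ = Real.sqrt (((d : ℝ) - 3) / Λ)) (g : ℝ → ℝ)
    (hg : g = fun r : ℝ => 1 - m * r ^ (-((d : ℤ) - 3)) - Λ * r ^ 2 / ((d : ℝ) - 1)) :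
    ((∃ r : ℝ, 0 < r ∧ g r = 0 ∧ deriv g r = 0) ↔ m = 2 * r₀ ^ (d - 3) / ((d : ℝ) - 1)) ∧
    (∀ r : ℝ, 0 < r → g r = 0 → deriv g r = 0 → r = r₀) := by
  obtain ⟨n, rfl⟩ : ∃ n, d = n + 3 := ⟨d - 3, by omega⟩
  have hn : n ≠ 0 := by omega
  rw [show ((n + 3 : ℕ) : ℝ) - 3 = n by push_cast; ring] at hr₀
  rw [show ((n + 3 : ℕ) : ℝ) - 1 = n + 2 by push_cast; ring] at hg ⊢
  rw [Nat.add_sub_cancel]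
  replace hg : g = blackening n Λ m := by
    rw [hg, show -(((n + 3 : ℕ) : ℤ) - 3) = -(n : ℤ) by push_cast; ring]
    funext r
    rw [blackening, zpow_neg, zpow_natCast]
  have hr₀_pos : 0 < r₀ := hr₀ ▸ Real.sqrt_pos.mpr (div_pos (by positivity) hΛ)
  have hdouble (r : ℝ) (hr : 0 < r) :
      g r = 0 ∧ deriv g r = 0 ↔ r = r₀ ∧ m = 2 * r ^ n / (n + 2) := by
    rw [hg, blackening_eq_zero_and_deriv_eq_zero_iff hn Λ m hr.ne', hr₀,
      eq_sqrt_div_iff_mul_sq_eq hΛ n.cast_nonneg hr.le]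
  refine ⟨⟨fun ⟨r, hr, hr_double⟩ => ?_,
    fun hm => ⟨r₀, hr₀_pos, (hdouble r₀ hr₀_pos).2 ⟨rfl, hm⟩⟩⟩,
    fun r hr hgr hg'r => ((hdouble r hr).1 ⟨hgr, hg'r⟩).1⟩
  obtain ⟨rfl, hm⟩ := (hdouble r hr).1 hr_double
  exact hm
end

section
/- Let d ≥ 4, Λ, C be real with C ≠ 0, and φ(ρ) = -(4/C²)·(Λ/(d-3))·[1 - (2/(d-1))·(1+Cρ/2)^{-(d-3)} - ((d-3)/(d-1))·(1+Cρ/2)²]. Then for all n ≥ 1, the n-th derivative satisfies φ^{(n+2)}(0) = (-1)^n·(2/(d-1))·((d-2+n)!/(d-3)!)·(C/2)^n·Λ. -/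
/-!
Near `ρ = 0` we have `φ = A - A B u ^ (3 - d) - A D u ^ 2` with `u = 1 + (C / 2) ρ`. From the
third derivative on, the quadratic term is gone, and the `k`-th derivative of `u ^ m` at `0` is
`(C / 2) ^ k m (m - 1) ⋯ (m - k + 1)`; for `m = 3 - d` this falling product is
`(-1) ^ k (d - 3) (d - 2) ⋯ (d + k - 4)`, a quotient of factorials.
-/

open Finset Filter Topology

section
variable {𝕜 : Type*} [NontriviallyNormedField 𝕜]

theorem contDiffAt_zpow {x : 𝕜} (hx : x ≠ 0) (m : ℤ) (n : WithTop ℕ∞) :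
    ContDiffAt 𝕜 n (fun y : 𝕜 => y ^ m) x := by
  obtain ⟨k, rfl | rfl⟩ := Int.eq_nat_or_neg m
  · simp only [zpow_natCast]
    fun_prop
  · simp only [zpow_neg, zpow_natCast]
    exact (contDiffAt_id.pow k).inv (pow_ne_zero k hx)

theorem iteratedDeriv_zpow (m : ℤ) (k : ℕ) (x : 𝕜) :
    iteratedDeriv k (fun y : 𝕜 => y ^ m) x = (∏ i ∈ range k, ((m : 𝕜) - i)) * x ^ (m - k) := by
  rw [iteratedDeriv_eq_iterate, iter_deriv_zpow]

theorem iteratedDeriv_affine_zpow {c : 𝕜} (hc : c ≠ 0) (a : 𝕜) (m : ℤ) (k : ℕ) (x : 𝕜) :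
    iteratedDeriv k (fun y => (a + c * y) ^ m) x =
      c ^ k * (∏ i ∈ range k, ((m : 𝕜) - i)) * (a + c * x) ^ (m - k) := by
  -- Factoring out `c` reduces to a translate of `y ↦ y ^ m`, which needs no smoothness.
  have hfactor : ∀ (j : ℤ) y, (a + c * y) ^ j = c ^ j * (a / c + y) ^ j := fun j y => by
    rw [← mul_zpow, mul_add, mul_div_cancel₀ a hc]
  have hpow : c ^ m = c ^ k * c ^ (m - k) := by
    rw [← zpow_natCast, ← zpow_add₀ hc, add_sub_cancel]
  simp only [hfactor, iteratedDeriv_const_mul_field,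
    iteratedDeriv_comp_const_add k (fun y : 𝕜 => y ^ m), iteratedDeriv_zpow, hpow]
  ring

theorem iteratedDeriv_const_sub_affine_zpow_sub {c : 𝕜} (hc : c ≠ 0) {a x : 𝕜}
    (hx : a + c * x ≠ 0) (α β γ : 𝕜) (m j : ℤ) {k : ℕ} (hk : 0 < k) :
    iteratedDeriv k (fun y => α - β * (a + c * y) ^ m - γ * (a + c * y) ^ j) x =
      -(β * (c ^ k * (∏ i ∈ range k, ((m : 𝕜) - i)) * (a + c * x) ^ (m - k))) -
        γ * (c ^ k * (∏ i ∈ range k, ((j : 𝕜) - i)) * (a + c * x) ^ (j - k)) := by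
  have hsmooth : ∀ l : ℤ, ContDiffAt 𝕜 k (fun y => (a + c * y) ^ l) x := fun l =>
    (contDiffAt_zpow hx l _).comp x (by fun_prop)
  rw [iteratedDeriv_fun_sub (contDiffAt_const.sub (contDiffAt_const.mul (hsmooth m)))
      (contDiffAt_const.mul (hsmooth j)), iteratedDeriv_const_sub hk, iteratedDeriv_neg,
    iteratedDeriv_const_mul_field, iteratedDeriv_const_mul_field,
    iteratedDeriv_affine_zpow hc, iteratedDeriv_affine_zpow hc]

end

theorem prod_range_neg_natCast_sub {R : Type*} [CommRing R] (a k : ℕ) :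
    ∏ i ∈ range k, (-(a : R) - i) = (-1) ^ k * a.ascFactorial k := by
  calc ∏ i ∈ range k, (-(a : R) - i) = ∏ i ∈ range k, -((a : R) + i) :=
        prod_congr rfl fun i _ => by ring
    _ = (-1) ^ k * a.ascFactorial k := by
        rw [prod_neg, card_range, Nat.ascFactorial_eq_prod_range]
        push_cast
        rfl

/-- All-order derivatives at `ρ = 0` of the closed-form metric function `φ` of the extremal
Schwarzschild–de Sitter solution: for `n ≥ 1`,
`φ^{(n+2)}(0) = (-1)ⁿ (2/(d-1)) ((d-2+n)!/(d-3)!) (C/2)ⁿ Λ`. -/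
theorem extremal_SdS_phi_all_derivs (d : ℕ) (hd : 4 ≤ d) (Λ C : ℝ) (hC : C ≠ 0) (φ : ℝ → ℝ)
    (hφ : ∀ ρ : ℝ, 1 + C * ρ / 2 > 0 →
      φ ρ = -(4 / C ^ 2) * (Λ / ((d : ℝ) - 3)) *
        (1 - (2 / ((d : ℝ) - 1)) * (1 + C * ρ / 2) ^ (-((d : ℤ) - 3)) -
          (((d : ℝ) - 3) / ((d : ℝ) - 1)) * (1 + C * ρ / 2) ^ 2)) :
    ∀ n : ℕ, 1 ≤ n →
      iteratedDeriv (n + 2) φ 0 =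
        (-1 : ℝ) ^ n * (2 / ((d : ℝ) - 1)) *
          ((Nat.factorial (d - 2 + n) : ℝ) / (Nat.factorial (d - 3) : ℝ)) * (C / 2) ^ n * Λ := by
  intro n _
  set A := -(4 / C ^ 2) * (Λ / ((d : ℝ) - 3))
  set B := 2 / ((d : ℝ) - 1)
  set D := ((d : ℝ) - 3) / ((d : ℝ) - 1)
  set m := -((d : ℤ) - 3)
  have hnear : φ =ᶠ[𝓝 0] fun ρ =>
      A - A * B * (1 + C / 2 * ρ) ^ m - A * D * (1 + C / 2 * ρ) ^ (2 : ℤ) := by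
    have hpos : ∀ᶠ ρ in 𝓝 (0 : ℝ), 0 < 1 + C * ρ / 2 :=
      continuousAt_const.eventually_lt (by fun_prop) (by norm_num)
    filter_upwards [hpos] with ρ hρ
    rw [hφ ρ hρ, zpow_ofNat, show 1 + C * ρ / 2 = 1 + C / 2 * ρ by ring]
    ring
  rw [hnear.iteratedDeriv_eq, iteratedDeriv_const_sub_affine_zpow_sub (div_ne_zero hC two_ne_zero)
    (by norm_num) _ _ _ _ _ (by omega)]
  obtain ⟨e, rfl⟩ : ∃ e, d = e + 4 := ⟨d - 4, by omega⟩
  have hquad : ∏ i ∈ range (n + 2), (((2 : ℤ) : ℝ) - i) = 0 :=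
    prod_eq_zero (mem_range.2 (by omega : 2 < n + 2)) (by norm_num)
  have hm : ((m : ℤ) : ℝ) = -((e + 1 : ℕ) : ℝ) := by push_cast [m]; ring
  have hfac : (e + 4 - 2 + n).factorial = e.factorial * (e + 1).ascFactorial (n + 2) := by
    rw [Nat.factorial_mul_ascFactorial]; congr 1; omega
  rw [hquad, hm, prod_range_neg_natCast_sub, hfac, show e + 4 - 3 = e + 1 by omega,
    Nat.factorial_succ]
  simp only [A, B, mul_zero, zero_mul, add_zero, one_zpow]
  push_cast
  have h1 : (e : ℝ) + 4 - 1 ≠ 0 := by have := e.cast_nonneg (α := ℝ); linarith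
  have h3 : (e : ℝ) + 4 - 3 ≠ 0 := by have := e.cast_nonneg (α := ℝ); linarith
  field_simp
  ring
end
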